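/- In the braid group Br_{n+1}, the element (s_n s_{n-1} ··· s_1)(s_1 s_2 ··· s_n) commutes with ℓ_{i,j} for any interval [i,j] with 1 ≤ i ≤ j ≤ n-1 (i.e., any connected subgraph of A_n not containing the last vertex n). -/

import Mathlib

namespace BraidPaper

/-- The braid relations on `n` generators `s_1, ..., s_n` (indexed by `Fin n`):
far-away commutativity and the braid relation for adjacent generators.  The
corresponding presented group is the Artin braid group `Br_{n+1}`. -/
def braidRelsSet (n : ℕ) : Set (FreeGroup (Fin n)) :=
  {r | (∃ i j : Fin n, (i : ℕ) + 2 ≤ (j : ℕ) ∧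
        r = FreeGroup.of i * FreeGroup.of j * (FreeGroup.of i)⁻¹ * (FreeGroup.of j)⁻¹) ∨
       (∃ i j : Fin n, (i : ℕ) + 1 = (j : ℕ) ∧
        r = FreeGroup.of i * FreeGroup.of j * FreeGroup.of i *
            (FreeGroup.of j)⁻¹ * (FreeGroup.of i)⁻¹ * (FreeGroup.of j)⁻¹)}

/-- The Artin braid group `Br_{n+1}` on generators `s_1, ..., s_n`. -/
abbrev BraidGroup (n : ℕ) := PresentedGroup (braidRelsSet n)

/-- The generator `s_i` of `Br_{n+1}`, for `1 ≤ i ≤ n` (junk value `1` otherwise). -/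
def gen (n : ℕ) (i : ℕ) : BraidGroup n :=
  if h : 1 ≤ i ∧ i ≤ n then PresentedGroup.of (⟨i - 1, by omega⟩ : Fin n) else 1

/-- The descending product `s_j s_{j-1} ⋯ s_i` (equal to `1` if `j < i`). -/
def desc (n j i : ℕ) : BraidGroup n :=
  (((List.range' i (j + 1 - i)).reverse).map (gen n)).prod

/-- The ascending product `s_i s_{i+1} ⋯ s_j` (equal to `1` if `j < i`). -/
def asc (n i j : ℕ) : BraidGroup n :=
  ((List.range' i (j + 1 - i)).map (gen n)).prod

/-- The standard lift `ℓ_{i,j} = (s_i)(s_{i+1}s_i)⋯(s_j⋯s_i)` of the longest element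
over the interval `[i,j]`, with the convention `ℓ_{i,j} = 1` when `j < i`. -/
def ell (n i j : ℕ) : BraidGroup n :=
  ((List.range' i (j + 1 - i)).map (fun k => desc n k i)).prod

/- ### Auxiliary lemmas -/

lemma mk_rel_one {n : ℕ} {r : FreeGroup (Fin n)} (h : r ∈ braidRelsSet n) :
    (QuotientGroup.mk r : BraidGroup n) = 1 := by
  rw [QuotientGroup.eq_one_iff]
  exact Subgroup.subset_normalClosure h

open scoped commutatorElement in
lemma of_comm {n : ℕ} (i j : Fin n) (h : (i : ℕ) + 2 ≤ (j : ℕ)) :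
    Commute (PresentedGroup.of i : BraidGroup n) (PresentedGroup.of j) := by
  have h1 := mk_rel_one (n := n) (Or.inl ⟨i, j, h, rfl⟩)
  rw [← commutatorElement_eq_one_iff_commute]
  have : (⁅(PresentedGroup.of i : BraidGroup n), PresentedGroup.of j⁆ : BraidGroup n)
      = QuotientGroup.mk (FreeGroup.of i * FreeGroup.of j * (FreeGroup.of i)⁻¹ *
        (FreeGroup.of j)⁻¹) := rfl
  rw [this]; exact h1

lemma of_braid {n : ℕ} (i j : Fin n) (h : (i : ℕ) + 1 = (j : ℕ)) :
    (PresentedGroup.of i : BraidGroup n) * PresentedGroup.of j * PresentedGroup.of i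
      = PresentedGroup.of j * PresentedGroup.of i * PresentedGroup.of j := by
  have h1 := mk_rel_one (n := n) (Or.inr ⟨i, j, h, rfl⟩)
  have h2 : (QuotientGroup.mk (FreeGroup.of i * FreeGroup.of j * FreeGroup.of i *
        (FreeGroup.of j)⁻¹ * (FreeGroup.of i)⁻¹ * (FreeGroup.of j)⁻¹) : BraidGroup n)
      = (PresentedGroup.of i : BraidGroup n) * PresentedGroup.of j * PresentedGroup.of i *
        (PresentedGroup.of j)⁻¹ * (PresentedGroup.of i)⁻¹ * (PresentedGroup.of j)⁻¹ := rfl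
  rw [h2] at h1
  set a := (PresentedGroup.of i : BraidGroup n)
  set b := (PresentedGroup.of j : BraidGroup n)
  calc a * b * a = (a * b * a * b⁻¹ * a⁻¹ * b⁻¹) * (b * a * b) := by group
    _ = b * a * b := by rw [show a * b * a * b⁻¹ * a⁻¹ * b⁻¹ = 1 from h1]; group

lemma gen_comm {n a b : ℕ} (h : a + 2 ≤ b) : Commute (gen n a) (gen n b) := by
  unfold gen
  by_cases ha : 1 ≤ a ∧ a ≤ n
  · by_cases hb : 1 ≤ b ∧ b ≤ n
    · rw [dif_pos ha, dif_pos hb]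
      exact of_comm _ _ (by show a - 1 + 2 ≤ b - 1; omega)
    · rw [dif_neg hb]; exact Commute.one_right _
  · rw [dif_neg ha]; exact Commute.one_left _

lemma gen_braid {n a : ℕ} (h1 : 1 ≤ a) (h2 : a + 1 ≤ n) :
    gen n a * gen n (a + 1) * gen n a = gen n (a + 1) * gen n a * gen n (a + 1) := by
  unfold gen
  rw [dif_pos ⟨h1, by omega⟩, dif_pos (⟨by omega, h2⟩ : 1 ≤ a + 1 ∧ a + 1 ≤ n)]
  exact of_braid _ _ (by show a - 1 + 1 = a + 1 - 1; omega)

lemma asc_nil {n a b : ℕ} (h : b < a) : asc n a b = 1 := by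
  unfold asc
  have : b + 1 - a = 0 := by omega
  rw [this]; simp

lemma asc_cons {n a b : ℕ} (h : a ≤ b) : asc n a b = gen n a * asc n (a + 1) b := by
  unfold asc
  have h1 : b + 1 - a = (b + 1 - (a + 1)) + 1 := by omega
  rw [h1, List.range'_succ]
  simp

lemma desc_nil {n a b : ℕ} (h : b < a) : desc n b a = 1 := by
  unfold desc
  have : b + 1 - a = 0 := by omega
  rw [this]; simp

lemma desc_cons {n a b : ℕ} (ha : 1 ≤ a) (h : a ≤ b) :
    desc n b a = gen n b * desc n (b - 1) a := by
  unfold desc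
  have h1 : b + 1 - a = ((b - 1) + 1 - a) + 1 := by omega
  have h2 : a + ((b - 1) + 1 - a) = b := by omega
  rw [h1, List.range'_concat, one_mul, h2]
  simp

lemma gen_comm_asc {n k : ℕ} : ∀ (m a b : ℕ), b + 1 - a ≤ m → k + 2 ≤ a →
    Commute (gen n k) (asc n a b) := by
  intro m
  induction m with
  | zero => intro a b hm _; rw [asc_nil (by omega)]; exact Commute.one_right _
  | succ m ih =>
    intro a b hm ha
    by_cases hab : a ≤ b
    · rw [asc_cons hab]
      exact (gen_comm ha).mul_right (ih (a + 1) b (by omega) (by omega))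
    · rw [asc_nil (by omega)]; exact Commute.one_right _

lemma gen_comm_desc {n k : ℕ} : ∀ (m a b : ℕ), b + 1 - a ≤ m → b + 2 ≤ k → 1 ≤ a →
    Commute (gen n k) (desc n b a) := by
  intro m
  induction m with
  | zero => intro a b hm _ _; rw [desc_nil (by omega)]; exact Commute.one_right _
  | succ m ih =>
    intro a b hm hb ha
    by_cases hab : a ≤ b
    · rw [desc_cons ha hab]
      exact ((gen_comm hb).symm).mul_right (ih a (b - 1) (by omega) (by omega) ha)
    · rw [desc_nil (by omega)]; exact Commute.one_right _

lemma asc_gen {n : ℕ} : ∀ (m a k b : ℕ), k + 1 - a ≤ m → 1 ≤ a → a ≤ k → k + 1 ≤ b → b ≤ n →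
    asc n a b * gen n k = gen n (k + 1) * asc n a b := by
  intro m
  induction m with
  | zero => intro a k b hm _ hak _ _; omega
  | succ m ih =>
    intro a k b hm ha hak hkb hbn
    by_cases h : a = k
    · subst h
      rw [asc_cons (by omega), asc_cons (by omega)]
      have hc : Commute (gen n a) (asc n (a + 2) b) :=
        gen_comm_asc (b + 1 - (a + 2)) (a + 2) b le_rfl le_rfl
      have hb : gen n a * gen n (a + 1) * gen n a
          = gen n (a + 1) * gen n a * gen n (a + 1) := gen_braid ha (by omega)
      calc gen n a * (gen n (a + 1) * asc n (a + 2) b) * gen n a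
          = gen n a * gen n (a + 1) * gen n a * asc n (a + 2) b := by
            rw [mul_assoc (gen n a * gen n (a + 1))]
            rw [hc.eq]
            group
        _ = gen n (a + 1) * gen n a * gen n (a + 1) * asc n (a + 2) b := by rw [hb]
        _ = gen n (a + 1) * (gen n a * (gen n (a + 1) * asc n (a + 2) b)) := by group
    · rw [asc_cons (by omega : a ≤ b)]
      have hIH := ih (a + 1) k b (by omega) (by omega) (by omega) hkb hbn
      have hc : Commute (gen n a) (gen n (k + 1)) := gen_comm (by omega)
      calc gen n a * asc n (a + 1) b * gen n k
          = gen n a * (asc n (a + 1) b * gen n k) := by group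
        _ = gen n a * (gen n (k + 1) * asc n (a + 1) b) := by rw [hIH]
        _ = gen n (k + 1) * (gen n a * asc n (a + 1) b) := by
            rw [← mul_assoc, hc.eq]; group

lemma desc_gen {n : ℕ} : ∀ (m a k b : ℕ), b - k ≤ m → 1 ≤ a → a ≤ k → k + 1 ≤ b → b ≤ n →
    desc n b a * gen n (k + 1) = gen n k * desc n b a := by
  intro m
  induction m with
  | zero => intro a k b hm _ _ hkb _; omega
  | succ m ih =>
    intro a k b hm ha hak hkb hbn
    by_cases h : k + 1 = b
    · have hb1 : b - 1 = k := by omega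
      rw [desc_cons ha (by omega : a ≤ b), desc_cons ha (by omega : a ≤ b - 1)]
      have hc : Commute (gen n b) (desc n (b - 1 - 1) a) :=
        gen_comm_desc (b - 1 - 1 + 1 - a) a (b - 1 - 1) le_rfl (by omega) ha
      have hbr : gen n (b - 1) * gen n b * gen n (b - 1)
          = gen n b * gen n (b - 1) * gen n b := by
        have := gen_braid (a := b - 1) (by omega) (by omega : (b - 1) + 1 ≤ n)
        have hb : b - 1 + 1 = b := by omega
        rw [hb] at this
        exact this
      have e1 : gen n (k + 1) = gen n b := by rw [h]
      have e2 : gen n k = gen n (b - 1) := by rw [hb1]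
      rw [e1, e2]
      calc gen n b * (gen n (b - 1) * desc n (b - 1 - 1) a) * gen n b
          = gen n b * gen n (b - 1) * gen n b * desc n (b - 1 - 1) a := by
            rw [mul_assoc (gen n b * gen n (b - 1))]
            rw [hc.eq]
            group
        _ = gen n (b - 1) * gen n b * gen n (b - 1) * desc n (b - 1 - 1) a := by rw [hbr]
        _ = gen n (b - 1) * (gen n b * (gen n (b - 1) * desc n (b - 1 - 1) a)) := by group
    · rw [desc_cons ha (by omega : a ≤ b)]
      have hIH := ih a k (b - 1) (by omega) ha hak (by omega) (by omega)
      have hc : Commute (gen n k) (gen n b) := gen_comm (by omega)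
      calc gen n b * desc n (b - 1) a * gen n (k + 1)
          = gen n b * (desc n (b - 1) a * gen n (k + 1)) := by group
        _ = gen n b * (gen n k * desc n (b - 1) a) := by rw [hIH]
        _ = gen n k * (gen n b * desc n (b - 1) a) := by
            rw [← mul_assoc, ← hc.eq]; group

lemma DU_comm_gen {n k : ℕ} (h1 : 1 ≤ k) (h2 : k ≤ n - 1) :
    Commute (desc n n 1 * asc n 1 n) (gen n k) := by
  have hn : k + 1 ≤ n := by omega
  have hU : asc n 1 n * gen n k = gen n (k + 1) * asc n 1 n :=
    asc_gen (k + 1 - 1) 1 k n le_rfl le_rfl h1 hn le_rfl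
  have hD : desc n n 1 * gen n (k + 1) = gen n k * desc n n 1 :=
    desc_gen (n - k) 1 k n le_rfl le_rfl h1 hn le_rfl
  show _ * _ = _ * _
  calc desc n n 1 * asc n 1 n * gen n k
      = desc n n 1 * (asc n 1 n * gen n k) := by group
    _ = desc n n 1 * (gen n (k + 1) * asc n 1 n) := by rw [hU]
    _ = (desc n n 1 * gen n (k + 1)) * asc n 1 n := by group
    _ = gen n k * (desc n n 1 * asc n 1 n) := by rw [hD]; group

lemma DU_comm_desc {n : ℕ} : ∀ (fuel m i : ℕ), m + 1 - i ≤ fuel → 1 ≤ i → m ≤ n - 1 →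
    Commute (desc n n 1 * asc n 1 n) (desc n m i) := by
  intro fuel
  induction fuel with
  | zero =>
    intro m i hm _ _
    rw [desc_nil (a := i) (b := m) (by omega)]
    exact Commute.one_right _
  | succ fuel ih =>
    intro m i hm hi hmn
    by_cases him : i ≤ m
    · rw [desc_cons (a := i) (b := m) hi him]
      exact (DU_comm_gen (by omega) hmn).mul_right
        (ih (m - 1) i (by omega) hi (by omega))
    · rw [desc_nil (a := i) (b := m) (by omega)]
      exact Commute.one_right _

/-- `(s_n ⋯ s_1)(s_1 ⋯ s_n)` commutes with `ℓ_{i,j}` whenever `1 ≤ i ≤ j ≤ n-1`. -/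
theorem desc_asc_commute_ell (n i j : ℕ) (hi : 1 ≤ i) (hij : i ≤ j) (hj : j ≤ n - 1) :
    Commute (desc n n 1 * asc n 1 n) (ell n i j) := by
  unfold ell
  apply Commute.list_prod_right
  intro x hx
  rcases List.mem_map.mp hx with ⟨k, hk, rfl⟩
  rw [List.mem_range'_1] at hk
  exact DU_comm_desc (k + 1 - i) k i le_rfl hi (by omega)

end BraidPaper
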